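/- Let q be a prime power and consider the projective plane PG(2, q), whose points are the 1-dimensional subspaces of F_q^3 identified with powers of a primitive element α of F_{q^3} modulo s = q^2+q+1. For every 2-dimensional subspace Y of F_q^3 and every ℓ with 1 ≤ ℓ ≤ q^2+q, there exists j with 0 ≤ j < s such that both α^j and α^{j+ℓ} lie in Y. -/

import Mathlib

/-- Multiplication by a unit as an `F`-linear equivalence of an `F`-algebra. -/
private def mulLeftEquiv (F K : Type*) [Field F] [Field K] [Algebra F K] (u : Kˣ) :
    K ≃ₗ[F] K where
  toFun x := (u : K) * x
  invFun x := ((u⁻¹ : Kˣ) : K) * x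
  map_add' x y := mul_add _ _ _
  map_smul' c x := by simp [Algebra.mul_smul_comm]
  left_inv x := by field_simp; simp
  right_inv x := by field_simp; simp

/-- If `β ^ q = β` in `K` with `q = |F|` then `β` comes from `F`. -/
private lemma mem_range_of_pow_card {q : ℕ} {F K : Type*} [Field F] [Fintype F]
    (hF : Fintype.card F = q) [Field K] [Algebra F K] {β : K} (hβ : β ^ q = β) :
    ∃ c : F, algebraMap F K c = β := by
  classical
  by_contra h
  push_neg at h
  have hq2 : 2 ≤ q := hF ▸ Fintype.one_lt_card
  set p : Polynomial K := Polynomial.X ^ q - Polynomial.X with hp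
  have hdeg : p.degree = q := by
    rw [hp]
    rw [Polynomial.degree_sub_eq_left_of_degree_lt]
    · exact Polynomial.degree_X_pow q
    · rw [Polynomial.degree_X_pow, Polynomial.degree_X]
      exact_mod_cast by omega
  have hp0 : p ≠ 0 := fun h0 => by simp [h0] at hdeg
  have hnd : p.natDegree = q := Polynomial.natDegree_eq_of_degree_eq_some hdeg
  -- the finset of roots: image of F plus β
  set T : Finset K := insert β (Finset.univ.image (algebraMap F K)) with hT
  have hTcard : T.card = q + 1 := by
    rw [hT, Finset.card_insert_of_notMem]
    · rw [Finset.card_image_of_injective _ (algebraMap F K).injective,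
        Finset.card_univ, hF]
    · simp only [Finset.mem_image, Finset.mem_univ, true_and]
      rintro ⟨c, hc⟩; exact h c hc
  have hroots : T ⊆ p.roots.toFinset := by
    intro x hx
    rw [Multiset.mem_toFinset, Polynomial.mem_roots hp0]
    rw [hT, Finset.mem_insert] at hx
    rcases hx with rfl | hx
    · simp [hp, hβ]
    · simp only [Finset.mem_image, Finset.mem_univ, true_and] at hx
      obtain ⟨c, rfl⟩ := hx
      simp [hp, ← map_pow, ← hF, FiniteField.pow_card]
  have := (Finset.card_le_card hroots).trans
    ((Multiset.toFinset_card_le _).trans (Polynomial.card_roots' p))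
  omega

theorem singer_every_difference_on_a_line (q : ℕ) (F K : Type*) [Field F] [Fintype F]
    (hF : Fintype.card F = q) [Field K] [Algebra F K] (h3 : Module.finrank F K = 3)
    (α : Kˣ) (hα : orderOf α = q ^ 3 - 1)
    (Y : Submodule F K) (hY : Module.finrank F Y = 2)
    (ℓ : ℕ) (hl1 : 1 ≤ ℓ) (hl2 : ℓ ≤ q ^ 2 + q) :
    ∃ j : ℕ, j < q ^ 2 + q + 1 ∧ (α : K) ^ j ∈ Y ∧ (α : K) ^ (j + ℓ) ∈ Y := by
  have hq2 : 2 ≤ q := hF ▸ Fintype.one_lt_card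
  haveI : FiniteDimensional F K := FiniteDimensional.of_finrank_pos (by omega)
  haveI : Finite K := Module.finite_of_finite F
  haveI : Fintype K := Fintype.ofFinite K
  classical
  have hcardK : Fintype.card K = q ^ 3 := by
    rw [Module.card_fintype (Module.finBasis F K), h3, hF]; simp
  -- α generates Kˣ
  have hgen : ∀ x : Kˣ, ∃ m : ℕ, α ^ m = x := by
    have htop : Subgroup.zpowers α = ⊤ := by
      apply Subgroup.eq_top_of_card_eq
      rw [Nat.card_zpowers, hα, Nat.card_eq_fintype_card, Fintype.card_units, hcardK]
    intro x
    have : x ∈ Subgroup.zpowers α := htop ▸ Subgroup.mem_top x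
    obtain ⟨m, hm⟩ := mem_powers_iff_mem_zpowers.mpr this
    exact ⟨m, hm⟩
  -- intersection of Y and (α^ℓ) • Y is nontrivial
  set e : K ≃ₗ[F] K := mulLeftEquiv F K (α ^ ℓ) with he
  set Z : Submodule F K := Y.map (e : K →ₗ[F] K) with hZ
  have hZrank : Module.finrank F Z = 2 := by
    rw [hZ, LinearEquiv.finrank_map_eq, hY]
  have hsup : Module.finrank F (Y ⊔ Z : Submodule F K) ≤ 3 := h3 ▸ Submodule.finrank_le _
  have hinf : 0 < Module.finrank F (Y ⊓ Z : Submodule F K) := by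
    have := Submodule.finrank_sup_add_finrank_inf_eq Y Z
    omega
  obtain ⟨x, hxmem, hx0⟩ := Submodule.exists_mem_ne_zero_of_ne_bot
    (p := Y ⊓ Z) (by
      intro hbot
      rw [hbot, finrank_bot] at hinf
      omega)
  obtain ⟨hxY, hxZ⟩ := hxmem
  -- x = α^ℓ * y with y ∈ Y
  obtain ⟨y, hyY, hyx⟩ := hxZ
  have hy0 : y ≠ 0 := by
    rintro rfl
    apply hx0
    rw [← hyx]; simp [he, mulLeftEquiv]
  -- y = α ^ m
  obtain ⟨m, hm⟩ := hgen (Units.mk0 y hy0)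
  have hym : y = (α : K) ^ m := by
    have := congrArg (Units.val) hm
    simpa using this.symm
  have hxm : x = (α : K) ^ (m + ℓ) := by
    rw [← hyx, hym]
    simp [he, mulLeftEquiv, pow_add, mul_comm]
  -- α ^ s comes from F
  set s : ℕ := q ^ 2 + q + 1 with hs
  have hsmul : s * (q - 1) = q ^ 3 - 1 := by
    obtain ⟨r, rfl⟩ : ∃ r, q = r + 2 := ⟨q - 2, by omega⟩
    simp [hs]; ring_nf; omega
  have hβ1 : ((α : K) ^ s) ^ (q - 1) = 1 := by
    rw [← pow_mul, hsmul]
    have h1 : α ^ (q ^ 3 - 1) = 1 := hα ▸ pow_orderOf_eq_one α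
    simpa using congrArg Units.val h1
  have hβq : ((α : K) ^ s) ^ q = (α : K) ^ s := by
    have : q = (q - 1) + 1 := by omega
    rw [this, pow_succ, hβ1, one_mul]
  obtain ⟨c, hc⟩ := mem_range_of_pow_card hF hβq
  have hc0 : c ≠ 0 := by
    rintro rfl
    simp only [map_zero] at hc
    exact pow_ne_zero s (Units.ne_zero α) hc.symm
  -- reduce m mod s
  have hclosed : ∀ (n k : ℕ), (α : K) ^ (s * k + n) ∈ Y → (α : K) ^ n ∈ Y := by
    intro n k h
    have : (α : K) ^ n = (c⁻¹ ^ k) • ((α : K) ^ (s * k + n)) := by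
      rw [pow_add, pow_mul, ← hc, Algebra.smul_def, map_pow, map_inv₀, hc]
      field_simp
      rw [← mul_pow, one_div, inv_mul_cancel₀ (pow_ne_zero _ (Units.ne_zero α)), one_pow]
    rw [this]
    exact Y.smul_mem _ h
  refine ⟨m % s, Nat.mod_lt _ (by omega), ?_, ?_⟩
  · have hmem : (α : K) ^ m ∈ Y := hym ▸ hyY
    have hdm : s * (m / s) + m % s = m := Nat.div_add_mod m s
    exact hclosed _ (m / s) (by rw [hdm]; exact hmem)
  · apply hclosed (m % s + ℓ) (m / s)
    have : s * (m / s) + (m % s + ℓ) = m + ℓ := by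
      have := Nat.div_add_mod m s
      omega
    rw [this, ← hxm]
    exact hxY
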